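/- arXiv:2404.00713 — 6 statements merged into one kernel-verified Lean document; each statement's English description precedes it below -/
import Mathlib

section
/- Let f : ℝⁿ → ℝ ∪ {+∞} be proper, lower semicontinuous, and signed permutation invariant, let λ > 0, and let x ∈ ℝⁿ_↓ be such that prox_{λf}(x) is nonempty. Then: (a) there exists u ∈ prox_{λf}(x) with u ∈ ℝⁿ_↓ (i.e., u₁ ≥ u₂ ≥ … ≥ uₙ ≥ 0); (b) if moreover every entry of x is strictly positive, then prox_{λf}(x) ⊆ ℝⁿ₊. -/
/-!
Flipping signs and permuting coordinates leaves `f` unchanged, so it suffices to compare the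
quadratic terms. For `x ≥ 0`, replacing `u` by `|u|` does not increase `‖u - x‖²`, and strictly
decreases it when `x > 0` and some `uᵢ < 0`; for `x` sorted decreasingly, sorting `|u|` decreasingly
does not increase it either, by the rearrangement inequality `∑ |u|ᵢ xᵢ ≤ ∑ |u|_{σ i} xᵢ`.
-/

/-- A signed permutation matrix: exactly one nonzero entry in each row and each
column, that entry being `±1`. -/
def IsSignedPerm {n : ℕ} (P : Matrix (Fin n) (Fin n) ℝ) : Prop :=
  ∃ (σ : Equiv.Perm (Fin n)) (ε : Fin n → ℝ),
    (∀ i, ε i = 1 ∨ ε i = -1) ∧ ∀ i j, P i j = if j = σ i then ε i else 0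

/-- The proximity operator `prox_{λ f}(z)`: the set of global minimizers of
`(1/(2λ)) ‖u - z‖₂² + f(u)` over `u ∈ ℝⁿ`. -/
noncomputable def proxSetE {n : ℕ} (lam : ℝ) (f : (Fin n → ℝ) → EReal) (z : Fin n → ℝ) :
    Set (Fin n → ℝ) :=
  {u | ∀ v : Fin n → ℝ,
    ((1 / (2 * lam) * ∑ i, (u i - z i) ^ 2 : ℝ) : EReal) + f u ≤
      ((1 / (2 * lam) * ∑ i, (v i - z i) ^ 2 : ℝ) : EReal) + f v}

section SignedPerm

variable {n : ℕ} {β : Type*} {f : (Fin n → ℝ) → β}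

lemma isSignedPerm_mulVec (σ : Equiv.Perm (Fin n)) (ε : Fin n → ℝ)
    (hε : ∀ i, ε i = 1 ∨ ε i = -1) (u : Fin n → ℝ) :
    ∃ P : Matrix (Fin n) (Fin n) ℝ, IsSignedPerm P ∧ P.mulVec u = fun i => ε i * u (σ i) := by
  classical
  refine ⟨fun i j => if j = σ i then ε i else 0, ⟨σ, ε, hε, fun i j => rfl⟩, ?_⟩
  funext i
  simp [Matrix.mulVec, dotProduct]

variable (hinv : ∀ P : Matrix (Fin n) (Fin n) ℝ, IsSignedPerm P → ∀ x, f (P.mulVec x) = f x)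
include hinv

lemma apply_signedPerm_eq (σ : Equiv.Perm (Fin n)) (ε : Fin n → ℝ)
    (hε : ∀ i, ε i = 1 ∨ ε i = -1) (u : Fin n → ℝ) :
    f (fun i => ε i * u (σ i)) = f u := by
  obtain ⟨P, hP, hPu⟩ := isSignedPerm_mulVec σ ε hε u
  rw [← hPu, hinv P hP]

lemma apply_comp_perm_eq (σ : Equiv.Perm (Fin n)) (u : Fin n → ℝ) : f (u ∘ σ) = f u := by
  simpa [Function.comp_def] using apply_signedPerm_eq hinv σ 1 (fun _ => Or.inl rfl) u

lemma apply_abs_eq (u : Fin n → ℝ) : f (fun i => |u i|) = f u := by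
  have hε : ∀ i, (if u i < 0 then -1 else 1 : ℝ) = 1 ∨ (if u i < 0 then -1 else 1 : ℝ) = -1 :=
    fun i => by split_ifs <;> simp
  convert apply_signedPerm_eq hinv (Equiv.refl _) _ hε u using 2
  funext i
  split_ifs with h
  · simp [abs_of_neg h]
  · simp [abs_of_nonneg (not_lt.mp h)]

end SignedPerm

section Quadratic

variable {ι : Type*} [Fintype ι]

lemma sq_abs_sub_le {a b : ℝ} (hb : 0 ≤ b) : (|a| - b) ^ 2 ≤ (a - b) ^ 2 := by
  nlinarith [le_abs_self a, sq_abs a]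

lemma sq_abs_sub_lt {a b : ℝ} (ha : a < 0) (hb : 0 < b) : (|a| - b) ^ 2 < (a - b) ^ 2 := by
  rw [abs_of_neg ha]
  nlinarith

lemma sum_sq_abs_sub_le {u x : ι → ℝ} (hx : ∀ i, 0 ≤ x i) :
    ∑ i, (|u i| - x i) ^ 2 ≤ ∑ i, (u i - x i) ^ 2 :=
  Finset.sum_le_sum fun i _ => sq_abs_sub_le (hx i)

lemma sum_sq_abs_sub_lt {u x : ι → ℝ} (hx : ∀ i, 0 < x i) {i : ι} (hi : u i < 0) :
    ∑ i, (|u i| - x i) ^ 2 < ∑ i, (u i - x i) ^ 2 :=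
  Finset.sum_lt_sum (fun j _ => sq_abs_sub_le (hx j).le)
    ⟨i, Finset.mem_univ i, sq_abs_sub_lt hi (hx i)⟩

lemma sum_sq_sub_comp_perm_le {w x : ι → ℝ} {σ : Equiv.Perm ι} (h : Monovary (w ∘ σ) x) :
    ∑ i, (w (σ i) - x i) ^ 2 ≤ ∑ i, (w i - x i) ^ 2 := by
  have hrearr : ∑ i, w i * x i ≤ ∑ i, w (σ i) * x i := by
    simpa using h.sum_comp_perm_mul_le_sum_mul (σ := σ⁻¹)
  have hsq : ∑ i, w (σ i) ^ 2 = ∑ i, w i ^ 2 := Equiv.sum_comp σ (fun i => w i ^ 2)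
  simp only [sub_sq, Finset.sum_add_distrib, Finset.sum_sub_distrib,
    ← Finset.mul_sum, mul_assoc, hsq]
  linarith

end Quadratic

lemma exists_perm_antitone {n : ℕ} {α : Type*} [LinearOrder α] (w : Fin n → α) :
    ∃ σ : Equiv.Perm (Fin n), Antitone (w ∘ σ) :=
  ⟨Tuple.sort (OrderDual.toDual ∘ w), Tuple.monotone_sort (OrderDual.toDual ∘ w)⟩

section Prox

variable {n : ℕ} {lam : ℝ} {f : (Fin n → ℝ) → EReal} {z u v : Fin n → ℝ}

lemma mem_proxSetE_of_le (hu : u ∈ proxSetE lam f z) (hlam : 0 ≤ lam)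
    (hquad : ∑ i, (v i - z i) ^ 2 ≤ ∑ i, (u i - z i) ^ 2) (hf : f v ≤ f u) :
    v ∈ proxSetE lam f z := fun w =>
  le_trans (add_le_add (EReal.coe_le_coe_iff.mpr (by gcongr)) hf) (hu w)

lemma ne_top_of_mem_proxSetE (hproper : ∃ x, f x ≠ ⊤)
    (hu : u ∈ proxSetE lam f z) : f u ≠ ⊤ := by
  obtain ⟨v, hv⟩ := hproper
  intro htop
  have h := hu v
  rw [htop, EReal.add_top_of_ne_bot (EReal.coe_ne_bot _), top_le_iff] at h
  exact EReal.add_ne_top (EReal.coe_ne_top _) hv h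

lemma sum_sq_sub_le_of_mem_proxSetE (hu : u ∈ proxSetE lam f z) (hlam : 0 < lam)
    (htop : f u ≠ ⊤) (hbot : f u ≠ ⊥) (hf : f v ≤ f u) :
    ∑ i, (u i - z i) ^ 2 ≤ ∑ i, (v i - z i) ^ 2 := by
  have h := (hu v).trans (add_le_add_right hf _)
  rw [← EReal.coe_toReal htop hbot, ← EReal.coe_add, ← EReal.coe_add, EReal.coe_le_coe_iff,
    add_le_add_iff_right] at h
  exact le_of_mul_le_mul_left h (by positivity)

end Prox

theorem stmt_2_general {n : ℕ} (f : (Fin n → ℝ) → EReal)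
    (hproper : ∃ x, f x ≠ ⊤) (hnobot : ∀ x, f x ≠ ⊥)
    (hinv : ∀ P : Matrix (Fin n) (Fin n) ℝ, IsSignedPerm P → ∀ x, f (P.mulVec x) = f x)
    (lam : ℝ) (hlam : 0 < lam)
    (x : Fin n → ℝ) (hdesc : ∀ i j : Fin n, i ≤ j → x j ≤ x i) (hnonneg : ∀ i, 0 ≤ x i)
    (hne : (proxSetE lam f x).Nonempty) :
    (∃ u ∈ proxSetE lam f x, (∀ i j : Fin n, i ≤ j → u j ≤ u i) ∧ ∀ i, 0 ≤ u i) ∧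
    ((∀ i, 0 < x i) → ∀ u ∈ proxSetE lam f x, ∀ i, 0 ≤ u i) := by
  constructor
  · obtain ⟨u, hu⟩ := hne
    set w : Fin n → ℝ := fun i => |u i|
    obtain ⟨σ, hσ⟩ := exists_perm_antitone w
    have hw : w ∈ proxSetE lam f x :=
      mem_proxSetE_of_le hu hlam.le (sum_sq_abs_sub_le hnonneg) (apply_abs_eq hinv u).le
    refine ⟨w ∘ σ, ?_, hσ, fun i => abs_nonneg _⟩
    exact mem_proxSetE_of_le hw hlam.le (sum_sq_sub_comp_perm_le (hσ.monovary hdesc))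
      (apply_comp_perm_eq hinv σ w).le
  · intro hxpos u hu i
    by_contra! hi
    have htop := ne_top_of_mem_proxSetE hproper hu
    exact (sum_sq_sub_le_of_mem_proxSetE hu hlam htop (hnobot u)
      (apply_abs_eq hinv u).le).not_gt (sum_sq_abs_sub_lt hxpos hi)

theorem stmt_2 {n : ℕ} (f : (Fin n → ℝ) → EReal)
    (hproper : ∃ x, f x ≠ ⊤) (hnobot : ∀ x, f x ≠ ⊥)
    (hlsc : LowerSemicontinuous f)
    (hinv : ∀ P : Matrix (Fin n) (Fin n) ℝ, IsSignedPerm P → ∀ x, f (P.mulVec x) = f x)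
    (lam : ℝ) (hlam : 0 < lam)
    (x : Fin n → ℝ) (hdesc : ∀ i j : Fin n, i ≤ j → x j ≤ x i) (hnonneg : ∀ i, 0 ≤ x i)
    (hne : (proxSetE lam f x).Nonempty) :
    (∃ u ∈ proxSetE lam f x, (∀ i j : Fin n, i ≤ j → u j ≤ u i) ∧ ∀ i, 0 ≤ u i) ∧
    ((∀ i, 0 < x i) → ∀ u ∈ proxSetE lam f x, ∀ i, 0 ≤ u i) :=
  stmt_2_general f hproper hnobot hinv lam hlam x hdesc hnonneg hne
end

section
/- Let f : ℝⁿ → ℝ ∪ {+∞} be proper, lower semicontinuous, scale invariant, and signed permutation invariant; let ρ > 0 and x ∈ ℝⁿ_↓. Define F(u) := (ρ/2)‖u − x‖₂² + f(u) and G(w) := −(ρ/2)⟨x, w⟩² + f(w). Suppose w* is a global minimizer of G over S^{n-1}_+. Then min_{u ∈ ℝⁿ} F(u) = min{F(0), F(⟨x, w*⟩ w*)}. Consequently, 0 ∈ prox_{(1/ρ)f}(x) if and only if F(0) ≤ F(⟨x, w*⟩ w*), and ⟨x, w*⟩ w* ∈ prox_{(1/ρ)f}(x) if and only if F(⟨x,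 w*⟩ w*) ≤ F(0). -/
open Finset Filter Topology

theorem LowerSemicontinuousAt.apply_zero_le_of_smul_invariant {E β : Type*} [AddCommGroup E]
    [Module ℝ E] [TopologicalSpace E] [ContinuousSMul ℝ E] [LinearOrder β] {f : E → β}
    (hf : LowerSemicontinuousAt f 0) {x : E} (hscale : ∀ α : ℝ, 0 < α → f (α • x) = f x) :
    f 0 ≤ f x := by
  by_contra! hlt
  have htend : Tendsto (fun α : ℝ => α • x) (𝓝[>] 0) (𝓝 0) :=
    tendsto_nhdsWithin_of_tendsto_nhds (by simpa using (tendsto_id (x := 𝓝 (0 : ℝ))).smul_const x)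
  obtain ⟨α, hα_lt, hα_pos⟩ :=
    ((htend.eventually (hf (f x) hlt)).and self_mem_nhdsWithin).exists
  exact (hscale α hα_pos ▸ hα_lt).false

theorem LowerSemicontinuousAt.apply_smul_le_of_smul_invariant {E β : Type*} [AddCommGroup E]
    [Module ℝ E] [TopologicalSpace E] [ContinuousSMul ℝ E] [LinearOrder β] {f : E → β}
    (hf : LowerSemicontinuousAt f 0) {x : E} (hscale : ∀ α : ℝ, 0 < α → f (α • x) = f x)
    {t : ℝ} (ht : 0 ≤ t) : f (t • x) ≤ f x := by
  rcases ht.eq_or_lt with rfl | ht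
  · simpa using hf.apply_zero_le_of_smul_invariant hscale
  · exact (hscale t ht).le

theorem isSignedPerm_diagonal {n : ℕ} {ε : Fin n → ℝ} (hε : ∀ i, ε i = 1 ∨ ε i = -1) :
    IsSignedPerm (Matrix.diagonal ε) :=
  ⟨Equiv.refl _, ε, hε, fun i j => by simp [Matrix.diagonal_apply, eq_comm]⟩

theorem apply_abs_eq_of_signedPerm_invariant {n : ℕ} {β : Type*} {f : (Fin n → ℝ) → β}
    (hf : ∀ P : Matrix (Fin n) (Fin n) ℝ, IsSignedPerm P → ∀ x, f (P.mulVec x) = f x)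
    (w : Fin n → ℝ) : f |w| = f w := by
  let ε : Fin n → ℝ := fun i => if 0 ≤ w i then 1 else -1
  have hε : ∀ i, ε i = 1 ∨ ε i = -1 := fun i => by by_cases h : 0 ≤ w i <;> simp [ε, h]
  have hdiag : (Matrix.diagonal ε).mulVec w = |w| := by
    ext i
    rw [Matrix.mulVec_diagonal, Pi.abs_apply]
    by_cases h : 0 ≤ w i
    · simp [ε, h, abs_of_nonneg h]
    · simp [ε, h, abs_of_neg (not_le.1 h)]
  rw [← hdiag, hf _ (isSignedPerm_diagonal hε)]

section Objectives

variable {ι : Type*} [Fintype ι]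

theorem exists_pos_smul_of_ne_zero {u : ι → ℝ} (hu : u ≠ 0) :
    ∃ r : ℝ, 0 < r ∧ ∃ w : ι → ℝ, ∑ i, w i ^ 2 = 1 ∧ u = r • w := by
  have hsum : 0 < ∑ i, u i ^ 2 := by
    obtain ⟨i, hi⟩ := Function.ne_iff.1 hu
    exact sum_pos' (fun i _ => sq_nonneg _) ⟨i, mem_univ _, pow_two_pos_of_ne_zero hi⟩
  set r := √(∑ i, u i ^ 2)
  have hr : 0 < r := Real.sqrt_pos.2 hsum
  refine ⟨r, hr, r⁻¹ • u, ?_, by rw [smul_smul, mul_inv_cancel₀ hr.ne', one_smul]⟩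
  simp only [Pi.smul_apply, smul_eq_mul, mul_pow, ← mul_sum, inv_pow, Real.sq_sqrt hsum.le, r]
  exact inv_mul_cancel₀ hsum.ne'

theorem sum_smul_sub_sq (r : ℝ) (w x : ι → ℝ) :
    ∑ i, ((r • w) i - x i) ^ 2 =
      r ^ 2 * ∑ i, w i ^ 2 - 2 * r * ∑ i, x i * w i + ∑ i, x i ^ 2 := by
  simp only [Pi.smul_apply, smul_eq_mul, mul_sum, ← sum_sub_distrib, ← sum_add_distrib]
  exact sum_congr rfl fun i _ => by ring

variable (ρ : ℝ) (x : ι → ℝ) (f : (ι → ℝ) → EReal)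

noncomputable def proxObjective (u : ι → ℝ) : EReal :=
  ((ρ / 2 * ∑ i, (u i - x i) ^ 2 : ℝ) : EReal) + f u

noncomputable def sphereObjective (w : ι → ℝ) : EReal :=
  ((-(ρ / 2) * (∑ i, x i * w i) ^ 2 : ℝ) : EReal) + f w

variable {ρ x f}

theorem proxObjective_inner_smul_le {w : ι → ℝ} (hw : ∑ i, w i ^ 2 = 1)
    (hf : f ((∑ i, x i * w i) • w) ≤ f w) :
    proxObjective ρ x f ((∑ i, x i * w i) • w) ≤
      ((ρ / 2 * ∑ i, x i ^ 2 : ℝ) : EReal) + sphereObjective ρ x f w := by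
  rw [proxObjective, sphereObjective, sum_smul_sub_sq, hw, ← add_assoc, ← EReal.coe_add]
  refine add_le_add (le_of_eq ?_) hf
  congr 1
  ring

theorem add_sphereObjective_abs_le_proxObjective_smul (hρ : 0 ≤ ρ) (hx : ∀ i, 0 ≤ x i)
    {w : ι → ℝ} (hw : ∑ i, w i ^ 2 = 1) {r : ℝ} (hr : 0 ≤ r) (hf : f |w| = f (r • w)) :
    ((ρ / 2 * ∑ i, x i ^ 2 : ℝ) : EReal) + sphereObjective ρ x f |w| ≤
      proxObjective ρ x f (r • w) := by
  set s := ∑ i, x i * |w i|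
  have hinner : ∑ i, x i * w i ≤ s :=
    sum_le_sum fun i _ => mul_le_mul_of_nonneg_left (le_abs_self _) (hx i)
  -- `r ^ 2 - 2 r ⟨x, w⟩ ≥ r ^ 2 - 2 r s ≥ - s ^ 2`
  have hquad : -(ρ / 2) * s ^ 2 ≤ ρ / 2 * (r ^ 2 - 2 * r * ∑ i, x i * w i) := by
    nlinarith [sq_nonneg (r - s), mul_le_mul_of_nonneg_left hinner hr]
  rw [proxObjective, sphereObjective, sum_smul_sub_sq, hw, ← hf, ← add_assoc, ← EReal.coe_add]
  simp only [Pi.abs_apply]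
  exact add_le_add_left (EReal.coe_le_coe_iff.2 (by linarith)) _

end Objectives

theorem forall_le_iff_of_min_le {α β : Type*} [LinearOrder β] {F : α → β} {p q : α}
    (h : ∀ u, min (F p) (F q) ≤ F u) : (∀ v, F p ≤ F v) ↔ F p ≤ F q :=
  ⟨fun hp => hp q, fun hpq v => min_eq_left hpq ▸ h v⟩

theorem stmt_3_general {n : ℕ} (f : (Fin n → ℝ) → EReal)
    (hlsc : LowerSemicontinuous f)
    (hperminv : ∀ P : Matrix (Fin n) (Fin n) ℝ, IsSignedPerm P → ∀ x, f (P.mulVec x) = f x)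
    (hscale : ∀ α : ℝ, 0 < α → ∀ x : Fin n → ℝ, f (α • x) = f x)
    (ρ : ℝ) (hρ : 0 < ρ)
    (x : Fin n → ℝ) (hnonneg : ∀ i, 0 ≤ x i)
    (F G : (Fin n → ℝ) → EReal)
    (hF : ∀ u, F u = ((ρ / 2 * ∑ i, (u i - x i) ^ 2 : ℝ) : EReal) + f u)
    (hG : ∀ w, G w = ((-(ρ / 2) * (∑ i, x i * w i) ^ 2 : ℝ) : EReal) + f w)
    (wstar : Fin n → ℝ) (hw1 : ∑ i, (wstar i) ^ 2 = 1) (hw2 : ∀ i, 0 ≤ wstar i)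
    (hwmin : ∀ w : Fin n → ℝ, (∑ i, (w i) ^ 2 = 1) → (∀ i, 0 ≤ w i) → G wstar ≤ G w) :
    (∀ u : Fin n → ℝ, min (F 0) (F ((∑ i, x i * wstar i) • wstar)) ≤ F u) ∧
    ((∀ v : Fin n → ℝ, F 0 ≤ F v) ↔ F 0 ≤ F ((∑ i, x i * wstar i) • wstar)) ∧
    ((∀ v : Fin n → ℝ, F ((∑ i, x i * wstar i) • wstar) ≤ F v) ↔
      F ((∑ i, x i * wstar i) • wstar) ≤ F 0) := by
  obtain rfl : F = proxObjective ρ x f := funext hF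
  obtain rfl : G = sphereObjective ρ x f := funext hG
  have hmin : ∀ u, min (proxObjective ρ x f 0)
      (proxObjective ρ x f ((∑ i, x i * wstar i) • wstar)) ≤ proxObjective ρ x f u := by
    intro u
    rcases eq_or_ne u 0 with rfl | hu
    · exact min_le_left _ _
    obtain ⟨r, hr, w, hw, rfl⟩ := exists_pos_smul_of_ne_zero hu
    have hw_abs : ∑ i, |w| i ^ 2 = 1 := by simpa only [Pi.abs_apply, sq_abs] using hw
    have hinner : 0 ≤ ∑ i, x i * wstar i := sum_nonneg fun i _ => mul_nonneg (hnonneg i) (hw2 i)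
    calc _ ≤ proxObjective ρ x f ((∑ i, x i * wstar i) • wstar) := min_le_right _ _
      _ ≤ ((ρ / 2 * ∑ i, x i ^ 2 : ℝ) : EReal) + sphereObjective ρ x f wstar :=
          proxObjective_inner_smul_le hw1
            ((hlsc.lowerSemicontinuousAt 0).apply_smul_le_of_smul_invariant (fun α hα => hscale α hα wstar) hinner)
      _ ≤ ((ρ / 2 * ∑ i, x i ^ 2 : ℝ) : EReal) + sphereObjective ρ x f |w| :=
          add_le_add_right (hwmin _ hw_abs fun i => abs_nonneg (w i)) _
      _ ≤ proxObjective ρ x f (r • w) :=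
          add_sphereObjective_abs_le_proxObjective_smul hρ.le hnonneg hw hr.le
            ((apply_abs_eq_of_signedPerm_invariant hperminv w).trans (hscale r hr w).symm)
  exact ⟨hmin, forall_le_iff_of_min_le hmin,
    forall_le_iff_of_min_le fun u => min_comm (proxObjective ρ x f 0) _ ▸ hmin u⟩

theorem stmt_3 {n : ℕ} (f : (Fin n → ℝ) → EReal)
    (hproper : ∃ x, f x ≠ ⊤) (hnobot : ∀ x, f x ≠ ⊥)
    (hlsc : LowerSemicontinuous f)
    (hperminv : ∀ P : Matrix (Fin n) (Fin n) ℝ, IsSignedPerm P → ∀ x, f (P.mulVec x) = f x)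
    (hscale : ∀ α : ℝ, 0 < α → ∀ x : Fin n → ℝ, f (α • x) = f x)
    (ρ : ℝ) (hρ : 0 < ρ)
    (x : Fin n → ℝ) (hdesc : ∀ i j : Fin n, i ≤ j → x j ≤ x i) (hnonneg : ∀ i, 0 ≤ x i)
    (F G : (Fin n → ℝ) → EReal)
    (hF : ∀ u, F u = ((ρ / 2 * ∑ i, (u i - x i) ^ 2 : ℝ) : EReal) + f u)
    (hG : ∀ w, G w = ((-(ρ / 2) * (∑ i, x i * w i) ^ 2 : ℝ) : EReal) + f w)
    (wstar : Fin n → ℝ) (hw1 : ∑ i, (wstar i) ^ 2 = 1) (hw2 : ∀ i, 0 ≤ wstar i)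
    (hwmin : ∀ w : Fin n → ℝ, (∑ i, (w i) ^ 2 = 1) → (∀ i, 0 ≤ w i) → G wstar ≤ G w) :
    (∀ u : Fin n → ℝ, min (F 0) (F ((∑ i, x i * wstar i) • wstar)) ≤ F u) ∧
    ((∀ v : Fin n → ℝ, F 0 ≤ F v) ↔ F 0 ≤ F ((∑ i, x i * wstar i) • wstar)) ∧
    ((∀ v : Fin n → ℝ, F ((∑ i, x i * wstar i) • wstar) ≤ F v) ↔
      F ((∑ i, x i * wstar i) • wstar) ≤ F 0) :=
  stmt_3_general f hlsc hperminv hscale ρ hρ x hnonneg F G hF hG wstar hw1 hw2 hwmin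
end

section
/- Let ρ > 0 and x ∈ ℝⁿ₊, and let A_{ρ,x} = 2ee^⊤ − ρxx^⊤. (i) If x = αe for some α > 0, then A_{ρ,x} = (2 − ρα²)ee^⊤; in particular, if ρα² = 2 then A_{ρ,x} = 0, and otherwise its only nonzero eigenvalue is (2 − ρα²)n with eigenvector e/√n. (ii) If x is nonzero and not a scalar multiple of e, then Δ > 0, λ̄ = 2n − α̲ > 0, λ̲ = 2n − ᾱ < 0, the vectors w̄ = x − (ᾱ/(ρ‖x‖₁))e and w̲ = x − (α̲/(ρ‖x‖₁))e are nonzero and satisfy A_{ρ,x} w̄ = λ̄ w̄ and A_{ρ,x} w̲ = λ̲ w̲, and every other eigenvalue of A_{ρ,x} equals 0 (A_{ρ,x} has rank at most 2). -/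
/-!
Let `s₁ = ∑ xᵢ`, `s₂ = ∑ xᵢ²` and `N` be the dimension. Every `Av = 2 (e ⬝ v) e - ρ (x ⬝ v) x`
lies in the span of `e` and `x`, so `A` has rank at most two. For an eigenpair `(μ, v)` with
`μ ≠ 0` the pair `(S, T) = (e ⬝ v, x ⬝ v)` is nonzero and solves `(2N - μ) S = ρ s₁ T`,
`2 s₁ S = (ρ s₂ + μ) T`; the vanishing determinant says that `α = 2N - μ` is a root of
`α² - (ρ s₂ + 2N) α + 2 ρ s₁²`, whose roots are `α̲, ᾱ` (and `2N, ρNα²` when `x = α e`).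
Conversely `x - (α / (ρ s₁)) e` is an eigenvector for each root. The strict Cauchy–Schwarz
inequality `s₁² < N s₂` for nonconstant `x` gives `√Δ > |ρ s₂ / 2 - N|`, hence `Δ > 0` and the
signs of `λ̄, λ̲`.
-/

open Matrix Finset

section

variable {ι : Type*}

theorem sq_sum_lt_card_mul_sum_sq [Fintype ι] {x : ι → ℝ} (hx : ∀ c : ℝ, x ≠ fun _ => c) :
    (∑ i, x i) ^ 2 < Fintype.card ι * ∑ i, x i ^ 2 := by
  set N : ℝ := (Fintype.card ι : ℝ)
  obtain ⟨i₀, -⟩ := Function.ne_iff.mp (hx 0)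
  have hN : 0 < N := Nat.cast_pos.mpr (Fintype.card_pos_iff.mpr ⟨i₀⟩)
  have hsum : ∑ i, (N * x i - ∑ j, x j) ^ 2 = N * (N * ∑ i, x i ^ 2 - (∑ i, x i) ^ 2) := by
    simp only [sub_sq, mul_pow, sum_add_distrib, sum_sub_distrib, ← mul_sum, ← sum_mul,
      sum_const, card_univ, nsmul_eq_mul]
    ring
  obtain ⟨i, hi⟩ : ∃ i, N * x i - ∑ j, x j ≠ 0 := by
    by_contra! h
    exact hx ((∑ j, x j) / N) (funext fun i => by rw [eq_div_iff hN.ne', mul_comm]; linarith [h i])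
  have hpos : 0 < ∑ i, (N * x i - ∑ j, x j) ^ 2 :=
    sum_pos' (fun _ _ => sq_nonneg _) ⟨i, mem_univ _, by positivity⟩
  exact sub_pos.mp (pos_of_mul_pos_right (hsum ▸ hpos) hN.le)

noncomputable def twoOnesSubOuter (ρ : ℝ) (x : ι → ℝ) : Matrix ι ι ℝ :=
  (2 : ℝ) • vecMulVec 1 1 - ρ • vecMulVec x x

variable {ρ : ℝ} {x : ι → ℝ}

theorem twoOnesSubOuter_apply (i j : ι) : twoOnesSubOuter ρ x i j = 2 - ρ * x i * x j := by
  simp [twoOnesSubOuter, vecMulVec_apply, mul_assoc]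

theorem twoOnesSubOuter_mulVec [Fintype ι] (v : ι → ℝ) :
    twoOnesSubOuter ρ x *ᵥ v = (2 * ∑ i, v i) • 1 - (ρ * x ⬝ᵥ v) • x := by
  ext i
  simp only [mulVec, dotProduct, twoOnesSubOuter_apply, Pi.sub_apply, Pi.smul_apply, smul_eq_mul,
    Pi.one_apply, mul_one, mul_sum, sum_mul, ← sum_sub_distrib]
  exact sum_congr rfl fun j _ => by ring

theorem rank_twoOnesSubOuter_le [Fintype ι] : (twoOnesSubOuter ρ x).rank ≤ 2 := by
  have hfac : twoOnesSubOuter ρ x =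
      (of fun i k => ![2, -ρ * x i] k) * of fun k j => ![1, x j] k := by
    ext i j
    simp only [twoOnesSubOuter_apply, mul_apply, of_apply, Fin.sum_univ_two, cons_val_zero,
      cons_val_one, cons_val_fin_one]
    ring
  rw [hfac]
  exact (rank_mul_le_left _ _).trans ((rank_le_card_width _).trans_eq (Fintype.card_fin 2))

theorem twoOnesSubOuter_const_mulVec_const [Fintype ι] (α c : ℝ) :
    twoOnesSubOuter ρ (fun _ : ι => α) *ᵥ (fun _ => c) =
      ((2 - ρ * α ^ 2) * Fintype.card ι) • fun _ => c := by
  ext i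
  simp only [twoOnesSubOuter_mulVec, dotProduct, sum_const, card_univ, nsmul_eq_mul, Pi.sub_apply,
    Pi.smul_apply, Pi.one_apply, smul_eq_mul, mul_one]
  ring

theorem eq_zero_or_of_twoOnesSubOuter_mulVec_eq_smul [Fintype ι] {μ : ℝ} {v : ι → ℝ} (hv : v ≠ 0)
    (h : twoOnesSubOuter ρ x *ᵥ v = μ • v) :
    μ = 0 ∨ (2 * Fintype.card ι - μ) * (ρ * ∑ i, x i ^ 2 + μ) = 2 * ρ * (∑ i, x i) ^ 2 := by
  rw [twoOnesSubOuter_mulVec] at h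
  set S := ∑ i, v i
  set T := x ⬝ᵥ v
  have hS : (2 * Fintype.card ι - μ) * S = ρ * (∑ i, x i) * T := by
    have := congrArg (1 ⬝ᵥ ·) h
    simp only [dotProduct_sub, dotProduct_smul, smul_eq_mul, one_dotProduct, Pi.one_apply,
      sum_const, card_univ, nsmul_eq_mul, mul_one] at this
    linear_combination this
  have hT : 2 * (∑ i, x i) * S = (ρ * ∑ i, x i ^ 2 + μ) * T := by
    have := congrArg (x ⬝ᵥ ·) h
    have hxx : x ⬝ᵥ x = ∑ i, x i ^ 2 := by simp only [dotProduct, sq]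
    simp only [dotProduct_sub, dotProduct_smul, dotProduct_one, smul_eq_mul, hxx] at this
    linear_combination this
  by_cases hST : S = 0 ∧ T = 0
  · left
    rw [hST.1, hST.2, mul_zero, mul_zero, zero_smul, zero_smul, sub_zero, eq_comm,
      smul_eq_zero] at h
    exact h.resolve_right hv
  · right
    rw [not_and_or] at hST
    rcases hST with hS0 | hT0
    · refine mul_right_cancel₀ hS0 ?_
      linear_combination (ρ * ∑ i, x i ^ 2 + μ) * hS - ρ * (∑ i, x i) * hT
    · refine mul_right_cancel₀ hT0 ?_
      linear_combination (2 * ∑ i, x i) * hS - (2 * Fintype.card ι - μ) * hT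

theorem twoOnesSubOuter_mulVec_sub_const [Fintype ι] {β γ : ℝ} (hρx : ρ * ∑ i, x i ≠ 0)
    (hsum : β + γ = ρ * ∑ i, x i ^ 2 + 2 * Fintype.card ι)
    (hprod : β * γ = 2 * ρ * (∑ i, x i) ^ 2) :
    twoOnesSubOuter ρ x *ᵥ (x - fun _ => β / (ρ * ∑ i, x i)) =
      (2 * Fintype.card ι - γ) • (x - fun _ => β / (ρ * ∑ i, x i)) := by
  set c := β / (ρ * ∑ i, x i)
  have hc : ρ * (∑ i, x i) * c = β := mul_div_cancel₀ β hρx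
  clear_value c
  have hS : ∑ i, (x - fun _ => c : ι → ℝ) i = ∑ i, x i - Fintype.card ι * c := by
    simp [sum_sub_distrib]
  have hT : x ⬝ᵥ (x - fun _ => c) = ∑ i, x i ^ 2 - c * ∑ i, x i := by
    simp only [dotProduct, Pi.sub_apply, mul_sub, sum_sub_distrib, ← sum_mul, sq, mul_comm c]
  ext i
  rw [twoOnesSubOuter_mulVec, hS, hT]
  simp only [Pi.sub_apply, Pi.smul_apply, smul_eq_mul, Pi.one_apply, mul_one]
  refine mul_left_cancel₀ hρx ?_
  linear_combination (ρ * (∑ i, x i) * x i) * hsum - hprod + (ρ * (∑ i, x i) * x i - γ) * hc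

theorem eq_zero_or_eq_or_eq_of_twoOnesSubOuter_mulVec_eq_smul [Fintype ι] {β γ μ : ℝ}
    {v : ι → ℝ} (hsum : β + γ = ρ * ∑ i, x i ^ 2 + 2 * Fintype.card ι)
    (hprod : β * γ = 2 * ρ * (∑ i, x i) ^ 2) (hv : v ≠ 0)
    (h : twoOnesSubOuter ρ x *ᵥ v = μ • v) :
    μ = 0 ∨ μ = 2 * Fintype.card ι - β ∨ μ = 2 * Fintype.card ι - γ := by
  refine (eq_zero_or_of_twoOnesSubOuter_mulVec_eq_smul hv h).imp_right fun hμ => ?_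
  have hroots : (μ - (2 * Fintype.card ι - β)) * (μ - (2 * Fintype.card ι - γ)) = 0 := by
    linear_combination (μ - 2 * Fintype.card ι) * hsum + hprod - hμ
  exact (mul_eq_zero.mp hroots).imp sub_eq_zero.mp sub_eq_zero.mp

theorem eq_zero_or_eq_of_twoOnesSubOuter_const_mulVec_eq_smul [Fintype ι] {α μ : ℝ}
    {v : ι → ℝ} (hv : v ≠ 0) (h : twoOnesSubOuter ρ (fun _ : ι => α) *ᵥ v = μ • v) :
    μ = 0 ∨ μ = (2 - ρ * α ^ 2) * Fintype.card ι := by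
  have hsums : ∑ _ : ι, α ^ 2 = Fintype.card ι * α ^ 2 ∧ ∑ _ : ι, α = Fintype.card ι * α := by
    simp only [sum_const, card_univ, nsmul_eq_mul, and_self]
  rcases eq_zero_or_eq_or_eq_of_twoOnesSubOuter_mulVec_eq_smul (β := 2 * Fintype.card ι)
    (γ := ρ * Fintype.card ι * α ^ 2) (by rw [hsums.1]; ring) (by rw [hsums.2]; ring) hv h
    with hμ | hμ | hμ
  · exact .inl hμ
  · exact .inl (by rw [hμ, sub_self])
  · exact .inr (by rw [hμ]; ring)

theorem abs_sub_card_lt_sqrt_of_ne_const [Fintype ι] (hρ : 0 < ρ)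
    (hx : ∀ c : ℝ, x ≠ fun _ => c) :
    |ρ / 2 * ∑ i, x i ^ 2 - Fintype.card ι| <
      √((ρ / 2 * ∑ i, x i ^ 2 + Fintype.card ι) ^ 2 - 2 * ρ * (∑ i, x i) ^ 2) := by
  rw [Real.lt_sqrt (abs_nonneg _), sq_abs]
  nlinarith [mul_pos hρ (sub_pos.mpr (sq_sum_lt_card_mul_sum_sq hx))]

end

theorem stmt_6_general {n : ℕ} (ρ : ℝ) (hρ : 0 < ρ)
    (x : Fin n → ℝ) (hx : ∀ i, 0 ≤ x i)
    (A : Matrix (Fin n) (Fin n) ℝ) (hA : ∀ i j, A i j = 2 - ρ * x i * x j)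
    (Δ αlo αhi lamhi lamlo : ℝ) (whi wlo : Fin n → ℝ)
    (hΔ : Δ = ((ρ / 2) * (∑ i, (x i) ^ 2) + n) ^ 2 - 2 * ρ * (∑ i, |x i|) ^ 2)
    (hαlo : αlo = ((ρ / 2) * (∑ i, (x i) ^ 2) + n) - Real.sqrt Δ)
    (hαhi : αhi = ((ρ / 2) * (∑ i, (x i) ^ 2) + n) + Real.sqrt Δ)
    (hlamhi : lamhi = 2 * n - αlo) (hlamlo : lamlo = 2 * n - αhi)
    (hwhi : ∀ i, whi i = x i - αhi / (ρ * ∑ j, |x j|))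
    (hwlo : ∀ i, wlo i = x i - αlo / (ρ * ∑ j, |x j|)) :
    -- (i) the case `x = α e` with `α > 0`
    ((∀ α : ℝ, 0 < α → x = (fun _ => α) →
      ((∀ i j, A i j = 2 - ρ * α ^ 2) ∧
       (ρ * α ^ 2 = 2 → A = 0) ∧
       (ρ * α ^ 2 ≠ 2 →
         A.mulVec (fun _ => (Real.sqrt n)⁻¹) =
           ((2 - ρ * α ^ 2) * n) • (fun _ => (Real.sqrt n)⁻¹) ∧
         ∀ (μ : ℝ) (v : Fin n → ℝ), v ≠ 0 → A.mulVec v = μ • v →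
           μ = 0 ∨ μ = (2 - ρ * α ^ 2) * n))) ∧
    -- (ii) the case where `x` is nonzero and not a scalar multiple of `e`
    ((x ≠ 0 ∧ ∀ c : ℝ, x ≠ fun _ => c) →
      (0 < Δ ∧ 0 < lamhi ∧ lamlo < 0 ∧ whi ≠ 0 ∧ wlo ≠ 0 ∧
       A.mulVec whi = lamhi • whi ∧ A.mulVec wlo = lamlo • wlo ∧
       (∀ (μ : ℝ) (v : Fin n → ℝ), v ≠ 0 → A.mulVec v = μ • v →
         μ = 0 ∨ μ = lamhi ∨ μ = lamlo) ∧
       A.rank ≤ 2))) := by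
  have hN : (Fintype.card (Fin n) : ℝ) = n := by rw [Fintype.card_fin]
  obtain rfl : A = twoOnesSubOuter ρ x :=
    Matrix.ext fun i j => (hA i j).trans (twoOnesSubOuter_apply i j).symm
  refine ⟨fun α _ hxα => ?_, fun ⟨_, hxc⟩ => ?_⟩
  · subst hxα
    refine ⟨fun i j => by rw [twoOnesSubOuter_apply]; ring, fun h => ?_,
      fun _ => ⟨?_, fun μ v hv hAv => ?_⟩⟩
    · ext i j
      rw [twoOnesSubOuter_apply, Matrix.zero_apply]
      linear_combination -h
    · simpa only [hN] using twoOnesSubOuter_const_mulVec_const (ι := Fin n) (ρ := ρ) α (√n)⁻¹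
    · simpa only [hN] using eq_zero_or_eq_of_twoOnesSubOuter_const_mulVec_eq_smul hv hAv
  · have habs : ∑ i, |x i| = ∑ i, x i := sum_congr rfl fun i _ => abs_of_nonneg (hx i)
    rw [habs] at hΔ hwhi hwlo
    obtain rfl : whi = x - fun _ => αhi / (ρ * ∑ j, x j) := funext hwhi
    obtain rfl : wlo = x - fun _ => αlo / (ρ * ∑ j, x j) := funext hwlo
    have hgap := abs_sub_card_lt_sqrt_of_ne_const hρ hxc
    rw [hN, ← hΔ] at hgap
    have hΔpos : 0 < Δ := Real.sqrt_pos.mp ((abs_nonneg _).trans_lt hgap)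
    have hsum : αlo + αhi = ρ * ∑ i, x i ^ 2 + 2 * Fintype.card (Fin n) := by
      rw [hαlo, hαhi, hN]; ring
    have hprod : αlo * αhi = 2 * ρ * (∑ i, x i) ^ 2 := by
      rw [hαlo, hαhi]; linear_combination -Real.sq_sqrt hΔpos.le - hΔ
    have hρx : ρ * ∑ i, x i ≠ 0 := by
      obtain ⟨j, hj⟩ := Function.ne_iff.mp (hxc 0)
      exact (mul_pos hρ (sum_pos' (fun i _ => hx i) ⟨j, mem_univ _, (hx j).lt_of_ne' hj⟩)).ne'
    subst hlamhi hlamlo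
    refine ⟨hΔpos, by linarith [abs_lt.mp hgap], by linarith [abs_lt.mp hgap],
      sub_ne_zero.mpr (hxc _), sub_ne_zero.mpr (hxc _), ?_, ?_, fun μ v hv hAv => ?_,
      rank_twoOnesSubOuter_le⟩
    · simpa only [hN] using twoOnesSubOuter_mulVec_sub_const hρx
        (by linear_combination hsum) (by linear_combination hprod)
    · simpa only [hN] using twoOnesSubOuter_mulVec_sub_const hρx hsum hprod
    · simpa only [hN] using
        eq_zero_or_eq_or_eq_of_twoOnesSubOuter_mulVec_eq_smul
          (by linear_combination hsum) (by linear_combination hprod) hv hAv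

theorem stmt_6 {n : ℕ} (hn : 0 < n) (ρ : ℝ) (hρ : 0 < ρ)
    (x : Fin n → ℝ) (hx : ∀ i, 0 ≤ x i)
    (A : Matrix (Fin n) (Fin n) ℝ) (hA : ∀ i j, A i j = 2 - ρ * x i * x j)
    (Δ αlo αhi lamhi lamlo : ℝ) (whi wlo : Fin n → ℝ)
    (hΔ : Δ = ((ρ / 2) * (∑ i, (x i) ^ 2) + n) ^ 2 - 2 * ρ * (∑ i, |x i|) ^ 2)
    (hαlo : αlo = ((ρ / 2) * (∑ i, (x i) ^ 2) + n) - Real.sqrt Δ)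
    (hαhi : αhi = ((ρ / 2) * (∑ i, (x i) ^ 2) + n) + Real.sqrt Δ)
    (hlamhi : lamhi = 2 * n - αlo) (hlamlo : lamlo = 2 * n - αhi)
    (hwhi : ∀ i, whi i = x i - αhi / (ρ * ∑ j, |x j|))
    (hwlo : ∀ i, wlo i = x i - αlo / (ρ * ∑ j, |x j|)) :
    -- (i) the case `x = α e` with `α > 0`
    ((∀ α : ℝ, 0 < α → x = (fun _ => α) →
      ((∀ i j, A i j = 2 - ρ * α ^ 2) ∧
       (ρ * α ^ 2 = 2 → A = 0) ∧
       (ρ * α ^ 2 ≠ 2 →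
         A.mulVec (fun _ => (Real.sqrt n)⁻¹) =
           ((2 - ρ * α ^ 2) * n) • (fun _ => (Real.sqrt n)⁻¹) ∧
         ∀ (μ : ℝ) (v : Fin n → ℝ), v ≠ 0 → A.mulVec v = μ • v →
           μ = 0 ∨ μ = (2 - ρ * α ^ 2) * n))) ∧
    -- (ii) the case where `x` is nonzero and not a scalar multiple of `e`
    ((x ≠ 0 ∧ ∀ c : ℝ, x ≠ fun _ => c) →
      (0 < Δ ∧ 0 < lamhi ∧ lamlo < 0 ∧ whi ≠ 0 ∧ wlo ≠ 0 ∧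
       A.mulVec whi = lamhi • whi ∧ A.mulVec wlo = lamlo • wlo ∧
       (∀ (μ : ℝ) (v : Fin n → ℝ), v ≠ 0 → A.mulVec v = μ • v →
         μ = 0 ∨ μ = lamhi ∨ μ = lamlo) ∧
       A.rank ≤ 2))) :=
  stmt_6_general ρ hρ x hx A hA Δ αlo αhi lamhi lamlo whi wlo hΔ hαlo hαhi hlamhi hlamlo hwhi hwlo
end

section
/- Let ρ > 0 and let x ∈ ℝⁿ_↓ be nonzero and not a scalar multiple of the all-ones vector e. If xₙ ≤ α̲/(ρ‖x‖₁), where α̲ = ((ρ/2)‖x‖₂² + n) − √Δ and Δ = ((ρ/2)‖x‖₂² + n)² − 2ρ‖x‖₁², then every global minimizer of ½wᵀA_{ρ,x}w over S^{n-1}_+ has at least one zero entry, and there exists a global minimizer w* with its last entry (w*)ₙ = 0. -/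
/-!
An interior minimizer `w` of `q(v) = vᵀAv` on `S^{n-1}_+` is a critical point of the Rayleigh
quotient: `A w = λ w` with `λ = q(w)`, and `q(d) ≥ λ‖d‖²` whenever `d ⊥ w`. For `A = A_{ρ,x}`,
pairing `A w = λ w` with `e` and with `x` shows that `α = λ + ρ‖x‖₂²` is a root of
`α² − (ρ‖x‖₂² + 2n) α + 2ρ‖x‖₁² = 0`, and the second-order condition tested on
`d = (eᵀw) x − (xᵀw) e` puts it at the smaller root `α̲`. Strict Cauchy–Schwarz then forces
`λ < 0`, so the coordinate `k` of `A w = λ w` gives `ρ (xᵀw) x_k > 2 eᵀw`, which is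
`x_k > α̲ / (ρ‖x‖₁)`; for `k = n` this is excluded by hypothesis. Since `x` is decreasing,
moving a zero entry of a minimizer to the last position increases `xᵀw`, so does not increase `q`.
-/

open Finset Matrix Filter Topology

def nonnegSphere (ι : Type*) [Fintype ι] : Set (ι → ℝ) := {v | v ⬝ᵥ v = 1 ∧ ∀ i, 0 ≤ v i}

section NonnegSphere

variable {ι : Type*} [Fintype ι]

lemma sum_sq_eq_dotProduct_self (v : ι → ℝ) : ∑ i, v i ^ 2 = v ⬝ᵥ v := by
  simp [dotProduct, sq]

lemma dotProduct_self_pos {v : ι → ℝ} (hv : v ≠ 0) : 0 < v ⬝ᵥ v :=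
  star_trivial v ▸ dotProduct_self_star_pos_iff.2 hv

lemma isCompact_nonnegSphere : IsCompact (nonnegSphere ι) := by
  have hclosed : IsClosed (nonnegSphere ι) := by
    simp only [nonnegSphere, Set.ofPred_and, Set.ofPred_forall]
    exact (isClosed_eq (by fun_prop) continuous_const).inter
      (isClosed_iInter fun i => isClosed_le continuous_const (continuous_apply i))
  refine (isCompact_Icc (a := 0) (b := 1)).of_isClosed_subset hclosed
    fun v ⟨hv1, hv0⟩ => ⟨hv0, fun i => ?_⟩
  have : v i * v i ≤ v ⬝ᵥ v := single_le_sum (f := fun j => v j * v j)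
    (fun j _ => mul_self_nonneg (v j)) (mem_univ i)
  show v i ≤ 1
  nlinarith [hv0 i]

lemma nonnegSphere_nonempty [Nonempty ι] : (nonnegSphere ι).Nonempty := by
  classical
  obtain ⟨i⟩ := ‹Nonempty ι›
  exact ⟨Pi.single i 1, by simp, fun j => by by_cases h : j = i <;> simp [h]⟩

lemma dotProduct_comp_swap [DecidableEq ι] (x w : ι → ℝ) (i j : ι) :
    x ⬝ᵥ (w ∘ Equiv.swap i j) = x ⬝ᵥ w + (x i - x j) * (w j - w i) := by
  rcases eq_or_ne i j with rfl | hij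
  · simp
  rw [← sub_eq_iff_eq_add', ← dotProduct_sub, dotProduct,
    Fintype.sum_eq_add i j hij fun k hk => by simp [Equiv.swap_apply_of_ne_of_ne hk.1 hk.2]]
  simp only [Pi.sub_apply, Function.comp_apply, Equiv.swap_apply_left, Equiv.swap_apply_right]
  ring

variable {A : Matrix ι ι ℝ} {w : ι → ℝ}

lemma mul_dotProduct_self_le_of_isMinOn (hw : IsMinOn (fun v => v ⬝ᵥ A *ᵥ v) (nonnegSphere ι) w)
    {v : ι → ℝ} (hv : ∀ i, 0 ≤ v i) : (w ⬝ᵥ A *ᵥ w) * (v ⬝ᵥ v) ≤ v ⬝ᵥ A *ᵥ v := by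
  rcases eq_or_ne v 0 with rfl | hv0
  · simp
  have hpos := dotProduct_self_pos hv0
  set r := (√(v ⬝ᵥ v))⁻¹
  have hr : r * r * (v ⬝ᵥ v) = 1 := by
    rw [← sq, inv_pow, Real.sq_sqrt hpos.le, inv_mul_cancel₀ hpos.ne']
  have hmin := isMinOn_iff.1 hw (r • v)
    ⟨by simpa [smul_dotProduct, dotProduct_smul, mul_assoc] using hr,
      fun i => mul_nonneg (by positivity) (hv i)⟩
  simp only [mulVec_smul, smul_dotProduct, dotProduct_smul, smul_eq_mul, ← mul_assoc] at hmin
  linear_combination mul_le_mul_of_nonneg_right hmin hpos.le + (v ⬝ᵥ A *ᵥ v) * hr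

lemma isLocalMin_perturb_of_isMinOn (hA : A.IsSymm)
    (hw : IsMinOn (fun v => v ⬝ᵥ A *ᵥ v) (nonnegSphere ι) w) (hw1 : w ⬝ᵥ w = 1)
    (hpos : ∀ i, 0 < w i) {d : ι → ℝ} (hd : d ⬝ᵥ w = 0) :
    IsLocalMin (fun t : ℝ =>
      2 * t * (d ⬝ᵥ A *ᵥ w) + t ^ 2 * (d ⬝ᵥ A *ᵥ d - (w ⬝ᵥ A *ᵥ w) * (d ⬝ᵥ d))) 0 := by
  have hnear : ∀ᶠ t in 𝓝 (0 : ℝ), ∀ i, 0 ≤ w i + t * d i := eventually_all.2 fun i =>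
    (((continuous_const.add (continuous_id.mul continuous_const)).tendsto 0).eventually
      (lt_mem_nhds (by simpa using hpos i))).mono fun _ h => h.le
  filter_upwards [hnear] with t ht
  have h := mul_dotProduct_self_le_of_isMinOn hw (v := w + t • d) ht
  have hsymm : w ⬝ᵥ A *ᵥ d = d ⬝ᵥ A *ᵥ w := by
    rw [dotProduct_mulVec, ← mulVec_transpose, hA, dotProduct_comm]
  simp only [mulVec_add, mulVec_smul, add_dotProduct, dotProduct_add, smul_dotProduct,
    dotProduct_smul, smul_eq_mul, hsymm, hw1, hd, dotProduct_comm w d] at h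
  nlinarith

lemma mulVec_eq_smul_of_isMinOn (hA : A.IsSymm)
    (hw : IsMinOn (fun v => v ⬝ᵥ A *ᵥ v) (nonnegSphere ι) w) (hw1 : w ⬝ᵥ w = 1)
    (hpos : ∀ i, 0 < w i) : A *ᵥ w = (w ⬝ᵥ A *ᵥ w) • w := by
  -- In the direction `d = A w − λ w` the first-order term is `2 t ‖d‖²`.
  set d := A *ᵥ w - (w ⬝ᵥ A *ᵥ w) • w
  have hd : d ⬝ᵥ w = 0 := by
    simp [d, sub_dotProduct, smul_dotProduct, hw1, dotProduct_comm w]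
  have hderiv := (isLocalMin_perturb_of_isMinOn hA hw hw1 hpos hd).hasDerivAt_eq_zero
    ((((hasDerivAt_id (0 : ℝ)).const_mul 2).mul_const _).add
      ((hasDerivAt_pow 2 (0 : ℝ)).mul_const _))
  have hdd : d ⬝ᵥ d = 0 := by
    have : d ⬝ᵥ A *ᵥ w = 0 := by simpa using hderiv
    simpa [d, sub_dotProduct, smul_dotProduct, hw1, dotProduct_comm w] using this
  exact sub_eq_zero.1 (dotProduct_self_eq_zero.1 hdd)

lemma mul_dotProduct_self_le_of_isMinOn_of_dotProduct_eq_zero (hA : A.IsSymm)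
    (hw : IsMinOn (fun v => v ⬝ᵥ A *ᵥ v) (nonnegSphere ι) w) (hw1 : w ⬝ᵥ w = 1)
    (hpos : ∀ i, 0 < w i) {d : ι → ℝ} (hd : d ⬝ᵥ w = 0) :
    (w ⬝ᵥ A *ᵥ w) * (d ⬝ᵥ d) ≤ d ⬝ᵥ A *ᵥ d := by
  have hmin := isLocalMin_perturb_of_isMinOn hA hw hw1 hpos hd
  have hfirst : d ⬝ᵥ A *ᵥ w = 0 := by
    rw [mulVec_eq_smul_of_isMinOn hA hw hw1 hpos, dotProduct_smul, hd, smul_zero]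
  obtain ⟨t, ht, ht0 : t ≠ 0⟩ := ((hmin.filter_mono nhdsWithin_le_nhds).and
    (self_mem_nhdsWithin (s := {0}ᶜ))).exists
  have : 0 ≤ t ^ 2 * (d ⬝ᵥ A *ᵥ d - (w ⬝ᵥ A *ᵥ w) * (d ⬝ᵥ d)) := by simpa [hfirst] using ht
  have := (mul_nonneg_iff_of_pos_left (by positivity)).1 this
  linarith

end NonnegSphere

lemma eq_sub_sqrt_of_sq_sub_mul_add_eq_zero {a b d : ℝ} (h : a ^ 2 - 2 * b * a + d = 0)
    (hab : a ≤ b) : a = b - √(b ^ 2 - d) := by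
  rw [show b ^ 2 - d = (b - a) ^ 2 by linear_combination (-1 : ℝ) * h,
    Real.sqrt_sq (sub_nonneg.2 hab)]
  ring

/-- The matrix `A_{ρ,x} = 2eeᵀ − ρxxᵀ`. -/
def matA {ι : Type*} (ρ : ℝ) (x : ι → ℝ) : Matrix ι ι ℝ := of fun i j => 2 - ρ * x i * x j

/-- `α̲` for `x ∈ ℝ^ι`, with `n = |ι|`. -/
noncomputable def alphaLo {ι : Type*} [Fintype ι] (ρ : ℝ) (x : ι → ℝ) : ℝ :=
  (ρ / 2 * ∑ i, x i ^ 2 + Fintype.card ι) -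
    √((ρ / 2 * ∑ i, x i ^ 2 + Fintype.card ι) ^ 2 - 2 * ρ * (∑ i, |x i|) ^ 2)

section MatA

variable {ι : Type*} {ρ : ℝ} {x : ι → ℝ}

lemma matA_isSymm : (matA ρ x).IsSymm := by
  ext i j
  simp [matA]
  ring

lemma smul_sub_smul_one_ne_zero (hx : ∀ c : ℝ, x ≠ fun _ => c) {a : ℝ} (ha : a ≠ 0) (b : ℝ) :
    a • x - b • 1 ≠ 0 := by
  intro h
  refine hx (b / a) (funext fun i => ?_)
  have := congrFun h i
  simp only [Pi.sub_apply, Pi.smul_apply, smul_eq_mul, Pi.one_apply, mul_one,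
    Pi.zero_apply] at this
  field_simp
  linarith

variable [Fintype ι]

lemma matA_mulVec (v : ι → ℝ) :
    matA ρ x *ᵥ v = (2 * (1 ⬝ᵥ v)) • 1 - (ρ * (x ⬝ᵥ v)) • x := by
  ext i
  simp only [matA, mulVec, dotProduct, of_apply, sub_mul, sum_sub_distrib, mul_sum, sum_mul,
    Pi.sub_apply, Pi.smul_apply, Pi.one_apply, smul_eq_mul, one_mul, mul_one]
  congr 1
  exact sum_congr rfl fun j _ => by ring

lemma dotProduct_matA_mulVec (u v : ι → ℝ) :
    u ⬝ᵥ matA ρ x *ᵥ v = 2 * (1 ⬝ᵥ u) * (1 ⬝ᵥ v) - ρ * (x ⬝ᵥ u) * (x ⬝ᵥ v) := by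
  rw [matA_mulVec, dotProduct_sub, dotProduct_smul, dotProduct_smul, dotProduct_comm u 1,
    dotProduct_comm u x, smul_eq_mul, smul_eq_mul]
  ring

lemma dotProduct_smul_sub_smul_one_self (a b : ℝ) :
    (a • x - b • 1) ⬝ᵥ (a • x - b • 1) =
      a ^ 2 * (x ⬝ᵥ x) - 2 * a * b * (1 ⬝ᵥ x) + b ^ 2 * Fintype.card ι := by
  simp only [sub_dotProduct, dotProduct_sub, smul_dotProduct, dotProduct_smul, smul_eq_mul,
    one_dotProduct_one, dotProduct_comm x 1]
  ring

lemma sq_one_dotProduct_lt [Nonempty ι] (hx : ∀ c : ℝ, x ≠ fun _ => c) :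
    (1 ⬝ᵥ x) ^ 2 < Fintype.card ι * (x ⬝ᵥ x) := by
  have hn : (0 : ℝ) < Fintype.card ι := by exact_mod_cast Fintype.card_pos
  have h := dotProduct_self_pos (smul_sub_smul_one_ne_zero hx hn.ne' (1 ⬝ᵥ x))
  rw [dotProduct_smul_sub_smul_one_self] at h
  nlinarith

lemma two_mul_dotProduct_matA_mulVec_add_le_of_isMinOn (hx : ∀ c : ℝ, x ≠ fun _ => c) {w : ι → ℝ}
    (hw : IsMinOn (fun v => v ⬝ᵥ matA ρ x *ᵥ v) (nonnegSphere ι) w) (hw1 : w ⬝ᵥ w = 1)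
    (hpos : ∀ i, 0 < w i) (hS : 0 < 1 ⬝ᵥ w)
    (h1 : 2 * Fintype.card ι * (1 ⬝ᵥ w) - ρ * (1 ⬝ᵥ x) * (x ⬝ᵥ w) =
      (w ⬝ᵥ matA ρ x *ᵥ w) * (1 ⬝ᵥ w))
    (h2 : 2 * (1 ⬝ᵥ x) * (1 ⬝ᵥ w) - ρ * (x ⬝ᵥ x) * (x ⬝ᵥ w) =
      (w ⬝ᵥ matA ρ x *ᵥ w) * (x ⬝ᵥ w)) :
    2 * (w ⬝ᵥ matA ρ x *ᵥ w) + ρ * (x ⬝ᵥ x) ≤ 2 * Fintype.card ι := by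
  set S := 1 ⬝ᵥ w
  set P := x ⬝ᵥ w
  set c := w ⬝ᵥ matA ρ x *ᵥ w
  set u := S • x - P • 1
  have hu : u ⬝ᵥ w = 0 := by
    simp only [u, sub_dotProduct, smul_dotProduct, smul_eq_mul, S, P, dotProduct_comm 1 w]
    ring
  have hsec := mul_dotProduct_self_le_of_isMinOn_of_dotProduct_eq_zero matA_isSymm hw hw1 hpos hu
  have huu : 0 < u ⬝ᵥ u := dotProduct_self_pos (smul_sub_smul_one_ne_zero hx hS.ne' P)
  have h1u : 1 ⬝ᵥ u = S * (1 ⬝ᵥ x) - P * Fintype.card ι := by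
    simp [u, dotProduct_sub, dotProduct_smul]
  have hxu : x ⬝ᵥ u = S * (x ⬝ᵥ x) - P * (1 ⬝ᵥ x) := by
    simp [u, dotProduct_sub, dotProduct_smul, dotProduct_comm x 1]
  have hquad : u ⬝ᵥ matA ρ x *ᵥ u =
      (2 * Fintype.card ι - ρ * (x ⬝ᵥ x) - c) * (u ⬝ᵥ u) := by
    rw [dotProduct_matA_mulVec, h1u, hxu, dotProduct_smul_sub_smul_one_self]
    linear_combination
      (S * (1 ⬝ᵥ x) - P * Fintype.card ι) * h2 - (S * (x ⬝ᵥ x) - P * (1 ⬝ᵥ x)) * h1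
  rw [hquad] at hsec
  nlinarith

theorem alphaLo_div_lt_of_isMinOn (hρ : 0 < ρ) (hx0 : ∀ i, 0 ≤ x i)
    (hx : ∀ c : ℝ, x ≠ fun _ => c) {w : ι → ℝ}
    (hw : IsMinOn (fun v => v ⬝ᵥ matA ρ x *ᵥ v) (nonnegSphere ι) w) (hw1 : w ⬝ᵥ w = 1)
    (hpos : ∀ i, 0 < w i) (k : ι) : alphaLo ρ x / (ρ * ∑ i, |x i|) < x k := by
  have : Nonempty ι := ⟨k⟩
  set n : ℝ := (Fintype.card ι : ℝ)
  set S := 1 ⬝ᵥ w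
  set P := x ⬝ᵥ w
  set L := 1 ⬝ᵥ x
  set Q := x ⬝ᵥ x
  set c := w ⬝ᵥ matA ρ x *ᵥ w
  have hkkt := mulVec_eq_smul_of_isMinOn matA_isSymm hw hw1 hpos
  have h1 : 2 * n * S - ρ * L * P = c * S := by
    have := congrArg (1 ⬝ᵥ ·) hkkt
    rwa [dotProduct_matA_mulVec 1 w, dotProduct_smul, one_dotProduct_one,
      dotProduct_comm x 1] at this
  have h2 : 2 * L * S - ρ * Q * P = c * P := by
    have := congrArg (x ⬝ᵥ ·) hkkt
    rwa [dotProduct_matA_mulVec x w, dotProduct_smul] at this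
  obtain ⟨j, hj⟩ : ∃ j, 0 < x j := by
    by_contra! h
    exact hx 0 (funext fun i => le_antisymm (h i) (hx0 i))
  have hS : 0 < S := by
    simpa [S, one_dotProduct] using sum_pos (fun i _ => hpos i) univ_nonempty
  have hL : 0 < L := by
    simpa [L, one_dotProduct] using sum_pos' (fun i _ => hx0 i) ⟨j, mem_univ j, hj⟩
  have hP : 0 < P := sum_pos' (fun i _ => mul_nonneg (hx0 i) (hpos i).le)
    ⟨j, mem_univ j, mul_pos hj (hpos j)⟩
  have hsec : 2 * c + ρ * Q ≤ 2 * n :=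
    two_mul_dotProduct_matA_mulVec_add_le_of_isMinOn hx hw hw1 hpos hS h1 h2
  have hroot : (2 * n - c) * (c + ρ * Q) = 2 * ρ * L ^ 2 :=
    mul_right_cancel₀ (mul_pos hS hP).ne'
      (by linear_combination ((c + ρ * Q) * P) * h1 - (ρ * P * L) * h2)
  have habs : ∑ i, |x i| = L := by simp [L, one_dotProduct, abs_of_nonneg (hx0 _)]
  have hα : alphaLo ρ x = c + ρ * Q := by
    rw [alphaLo, habs, sum_sq_eq_dotProduct_self]
    exact (eq_sub_sqrt_of_sq_sub_mul_add_eq_zero (by linear_combination (-1 : ℝ) * hroot)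
      (by linarith)).symm
  have hc : c < 0 := by
    by_contra! hc
    nlinarith [sq_one_dotProduct_lt hx, mul_nonneg hc (by linarith : 0 ≤ 2 * n - c - ρ * Q)]
  have hk : (matA ρ x *ᵥ w) k = c * w k := congrFun hkkt k
  simp only [matA_mulVec, Pi.sub_apply, Pi.smul_apply, smul_eq_mul, Pi.one_apply, mul_one] at hk
  rw [hα, habs, div_lt_iff₀ (mul_pos hρ hL)]
  nlinarith [mul_neg_of_neg_of_pos hc (hpos k)]

lemma isMinOn_comp_swap [DecidableEq ι] (hρ : 0 ≤ ρ) (hx0 : ∀ i, 0 ≤ x i) {w : ι → ℝ}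
    (hw : w ∈ nonnegSphere ι) (hmin : IsMinOn (fun v => v ⬝ᵥ matA ρ x *ᵥ v) (nonnegSphere ι) w)
    {i j : ι} (hwi : w i = 0) (hxij : x j ≤ x i) :
    w ∘ Equiv.swap i j ∈ nonnegSphere ι ∧
      IsMinOn (fun v => v ⬝ᵥ matA ρ x *ᵥ v) (nonnegSphere ι) (w ∘ Equiv.swap i j) := by
  have hmem : w ∘ Equiv.swap i j ∈ nonnegSphere ι := by
    refine ⟨?_, fun k => hw.2 _⟩
    rw [← hw.1]
    exact Equiv.sum_comp (Equiv.swap i j) fun k => w k * w k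
  refine ⟨hmem, isMinOn_iff.2 fun v hv => le_trans ?_ (isMinOn_iff.1 hmin v hv)⟩
  have hP : 0 ≤ x ⬝ᵥ w := dotProduct_nonneg_of_nonneg (fun k => hx0 k) hw.2
  have hδ : 0 ≤ (x i - x j) * w j := mul_nonneg (sub_nonneg.2 hxij) (hw.2 j)
  simp only [dotProduct_matA_mulVec, dotProduct_comp_swap, hwi, Pi.one_apply, sub_self, zero_mul,
    add_zero, sub_zero]
  nlinarith [mul_nonneg hρ (mul_nonneg hδ (add_nonneg (add_nonneg hP hP) hδ))]

lemma isMinOn_matA_iff {w : ι → ℝ} :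
    IsMinOn (fun v => v ⬝ᵥ matA ρ x *ᵥ v) (nonnegSphere ι) w ↔
      ∀ v : ι → ℝ, ∑ i, v i ^ 2 = 1 → (∀ i, 0 ≤ v i) →
        1 / 2 * ∑ i, ∑ j, (2 - ρ * x i * x j) * w i * w j ≤
          1 / 2 * ∑ i, ∑ j, (2 - ρ * x i * x j) * v i * v j := by
  have hq : ∀ v : ι → ℝ, ∑ i, ∑ j, (2 - ρ * x i * x j) * v i * v j = v ⬝ᵥ matA ρ x *ᵥ v := by
    intro v
    simp only [dotProduct, mulVec, matA, of_apply, mul_sum]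
    exact sum_congr rfl fun i _ => sum_congr rfl fun j _ => by ring
  simp [isMinOn_iff, nonnegSphere, hq, sum_sq_eq_dotProduct_self]

end MatA

theorem stmt_9_general {n : ℕ} (hn : 0 < n) (ρ : ℝ) (hρ : 0 < ρ)
    (x : Fin n → ℝ) (hdesc : ∀ i j : Fin n, i ≤ j → x j ≤ x i)
    (hnonneg : ∀ i, 0 ≤ x i) (hnotmult : ∀ c : ℝ, x ≠ fun _ => c)
    (Δ αlo : ℝ)
    (hΔ : Δ = ((ρ / 2) * (∑ i, (x i) ^ 2) + n) ^ 2 - 2 * ρ * (∑ i, |x i|) ^ 2)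
    (hαlo : αlo = ((ρ / 2) * (∑ i, (x i) ^ 2) + n) - Real.sqrt Δ)
    (hlast : x ⟨n - 1, Nat.sub_lt hn Nat.one_pos⟩ ≤ αlo / (ρ * ∑ j, |x j|)) :
    (∀ w : Fin n → ℝ, (∑ i, (w i) ^ 2 = 1) → (∀ i, 0 ≤ w i) →
      (∀ v : Fin n → ℝ, (∑ i, (v i) ^ 2 = 1) → (∀ i, 0 ≤ v i) →
        (1 / 2) * ∑ i, ∑ j, (2 - ρ * x i * x j) * w i * w j ≤
          (1 / 2) * ∑ i, ∑ j, (2 - ρ * x i * x j) * v i * v j) →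
      ∃ i, w i = 0) ∧
    (∃ w : Fin n → ℝ, (∑ i, (w i) ^ 2 = 1) ∧ (∀ i, 0 ≤ w i) ∧
      (∀ v : Fin n → ℝ, (∑ i, (v i) ^ 2 = 1) → (∀ i, 0 ≤ v i) →
        (1 / 2) * ∑ i, ∑ j, (2 - ρ * x i * x j) * w i * w j ≤
          (1 / 2) * ∑ i, ∑ j, (2 - ρ * x i * x j) * v i * v j) ∧
      w ⟨n - 1, Nat.sub_lt hn Nat.one_pos⟩ = 0) := by
  set last : Fin n := ⟨n - 1, Nat.sub_lt hn Nat.one_pos⟩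
  set q := fun v : Fin n → ℝ => v ⬝ᵥ matA ρ x *ᵥ v
  simp only [← isMinOn_matA_iff]
  simp only [sum_sq_eq_dotProduct_self]
  have hzero : ∀ w, w ⬝ᵥ w = 1 → (∀ i, 0 ≤ w i) → IsMinOn q (nonnegSphere (Fin n)) w →
      ∃ i, w i = 0 := by
    intro w hw1 hw0 hmin
    by_contra! hne
    have := alphaLo_div_lt_of_isMinOn hρ hnonneg hnotmult hmin hw1
      (fun i => (hw0 i).lt_of_ne' (hne i)) last
    simp only [alphaLo, Fintype.card_fin] at this
    subst hΔ hαlo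
    linarith
  have : Nonempty (Fin n) := ⟨last⟩
  obtain ⟨w, hw, hmin⟩ := isCompact_nonnegSphere.exists_isMinOn nonnegSphere_nonempty
    (by fun_prop : Continuous q).continuousOn
  obtain ⟨i, hi⟩ := hzero w hw.1 hw.2 hmin
  obtain ⟨hw', hmin'⟩ := isMinOn_comp_swap hρ.le hnonneg hw hmin hi
    (hdesc i last (Fin.mk_le_mk.2 (by omega)))
  exact ⟨hzero, w ∘ Equiv.swap i last, hw'.1, hw'.2, hmin', by simpa using hi⟩

theorem stmt_9 {n : ℕ} (hn : 0 < n) (ρ : ℝ) (hρ : 0 < ρ)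
    (x : Fin n → ℝ) (hdesc : ∀ i j : Fin n, i ≤ j → x j ≤ x i)
    (hnonneg : ∀ i, 0 ≤ x i) (hx0 : x ≠ 0) (hnotmult : ∀ c : ℝ, x ≠ fun _ => c)
    (Δ αlo : ℝ)
    (hΔ : Δ = ((ρ / 2) * (∑ i, (x i) ^ 2) + n) ^ 2 - 2 * ρ * (∑ i, |x i|) ^ 2)
    (hαlo : αlo = ((ρ / 2) * (∑ i, (x i) ^ 2) + n) - Real.sqrt Δ)
    (hlast : x ⟨n - 1, Nat.sub_lt hn Nat.one_pos⟩ ≤ αlo / (ρ * ∑ j, |x j|)) :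
    (∀ w : Fin n → ℝ, (∑ i, (w i) ^ 2 = 1) → (∀ i, 0 ≤ w i) →
      (∀ v : Fin n → ℝ, (∑ i, (v i) ^ 2 = 1) → (∀ i, 0 ≤ v i) →
        (1 / 2) * ∑ i, ∑ j, (2 - ρ * x i * x j) * w i * w j ≤
          (1 / 2) * ∑ i, ∑ j, (2 - ρ * x i * x j) * v i * v j) →
      ∃ i, w i = 0) ∧
    (∃ w : Fin n → ℝ, (∑ i, (w i) ^ 2 = 1) ∧ (∀ i, 0 ≤ w i) ∧
      (∀ v : Fin n → ℝ, (∑ i, (v i) ^ 2 = 1) → (∀ i, 0 ≤ v i) →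
        (1 / 2) * ∑ i, ∑ j, (2 - ρ * x i * x j) * w i * w j ≤
          (1 / 2) * ∑ i, ∑ j, (2 - ρ * x i * x j) * v i * v j) ∧
      w ⟨n - 1, Nat.sub_lt hn Nat.one_pos⟩ = 0) :=
  stmt_9_general hn ρ hρ x hdesc hnonneg hnotmult Δ αlo hΔ hαlo hlast
end

section
/- Let ρ > 0 and x = (x₁, x₂) ∈ ℝ²_↓ with x₁ > 0 and κ := x₂/x₁ ∈ [0, 1). Set α := arctan(2κ/(1−κ²)) ∈ [0, π/2) and define L : [0, α/2] → ℝ by L(θ) = sin(2θ − α)/cos(θ + π/4) + 2√2/(ρ‖x‖₂²). Then: (i) L is strictly convex on [0, α/2]; (ii) L(0) is positive, zero, or negative according as ρx₁x₂ − 1 is negative, zero, or positive, and L'(0) ≥ 0 if κ ≤ (√5 − 1)/2 while L'(0) < 0 if κ > (√5 − 1)/2; (iii) L has at most two roots in [0, α/2]. -/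
open Real Set

/-!
With `φ = θ + π/4` one has `sin (2θ - α) = cos α - 2 cos φ cos (φ - α)`, so up to the additive
constant `L θ = cos α / cos φ - 2 cos (φ - α)`. For `θ ∈ [0, α/2]` and `0 ≤ α < π/2` both `φ` and
`φ - α` lie in `(-π/2, π/2)`; there `cos α / cos φ` is strictly convex (a positive constant over a
positive strictly concave function) and `-2 cos (φ - α)` is convex, so `L` is strictly convex and
takes the value `0` at most twice. Since `α = 2 arctan κ`, `sin α = 2κ/(1+κ²)` and
`cos α = (1-κ²)/(1+κ²)`, which gives `L 0 = 2√2 (1 - ρ x₀ x₁) / (ρ ‖x‖²)` and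
`L' 0 = √2 (2 cos α - sin α) = 2√2 (1 - κ - κ²) / (1 + κ²)`.
-/

theorem StrictConcaveOn.const_div {E : Type*} [AddCommGroup E] [Module ℝ E] {s : Set E}
    {f : E → ℝ} (hf : StrictConcaveOn ℝ s f) (hpos : ∀ x ∈ s, 0 < f x) {c : ℝ} (hc : 0 < c) :
    StrictConvexOn ℝ s fun x => c / f x := by
  refine ⟨hf.1, fun x hx y hy hxy a b ha hb hab => ?_⟩
  have hfx := hpos x hx
  have hfy := hpos y hy
  have hmix : 0 < a * f x + b * f y := by positivity
  calc c / f (a • x + b • y) < c / (a * f x + b * f y) :=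
        div_lt_div_of_pos_left hc hmix (hf.2 hx hy hxy ha hb hab)
    _ ≤ a * (c / f x) + b * (c / f y) := by
        simpa only [smul_eq_mul, zpow_neg_one, div_eq_mul_inv, mul_left_comm] using
          ((convexOn_zpow (𝕜 := ℝ) (-1)).smul hc.le).2 (mem_Ioi.2 hfx) (mem_Ioi.2 hfy)
            ha.le hb.le hab

namespace Real

theorem sin_two_mul_arctan (t : ℝ) : sin (2 * arctan t) = 2 * t / (1 + t ^ 2) := by
  have h : √(1 + t ^ 2) ^ 2 = 1 + t ^ 2 := sq_sqrt (by positivity)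
  rw [sin_two_mul, sin_arctan, cos_arctan, mul_assoc, div_mul_div_comm, mul_one, ← sq, h]
  ring

theorem cos_two_mul_arctan (t : ℝ) : cos (2 * arctan t) = (1 - t ^ 2) / (1 + t ^ 2) := by
  rw [cos_two_mul, cos_sq_arctan]
  field_simp
  ring

theorem sin_arctan_two_mul_div_one_sub_sq {t : ℝ} (h₁ : -1 < t) (h₂ : t < 1) :
    sin (arctan (2 * t / (1 - t ^ 2))) = 2 * t / (1 + t ^ 2) := by
  rw [← two_mul_arctan h₁ h₂, sin_two_mul_arctan]

theorem cos_arctan_two_mul_div_one_sub_sq {t : ℝ} (h₁ : -1 < t) (h₂ : t < 1) :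
    cos (arctan (2 * t / (1 - t ^ 2))) = (1 - t ^ 2) / (1 + t ^ 2) := by
  rw [← two_mul_arctan h₁ h₂, cos_two_mul_arctan]

theorem sin_two_mul_sub_eq_cos_sub_two_mul_cos_mul_cos (θ α : ℝ) :
    sin (2 * θ - α) = cos α - 2 * cos (θ + π / 4) * cos (θ + π / 4 - α) := by
  have h : cos (θ + π / 4) * cos (θ + π / 4 - α) * 2 = cos (2 * θ + π / 2 - α) + cos α := by
    rw [cos_add_cos]; ring_nf
  rw [show 2 * θ + π / 2 - α = (2 * θ - α) + π / 2 by ring, cos_add_pi_div_two] at h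
  linarith

end Real

theorem strictConvexOn_div_cos_sub_two_mul_cos_sub {α : ℝ} (hα : 0 < cos α) :
    StrictConvexOn ℝ (Ioo (-(π / 2)) (π / 2) ∩ Icc (α - π / 2) (α + π / 2))
      fun φ => cos α / cos φ - 2 * cos (φ - α) := by
  have hsec : StrictConvexOn ℝ (Ioo (-(π / 2)) (π / 2)) fun φ => cos α / cos φ :=
    (strictConcaveOn_cos_Icc.subset Ioo_subset_Icc_self (convex_Ioo _ _)).const_div
      (fun φ hφ => cos_pos_of_mem_Ioo hφ) hα
  have hcos : ConcaveOn ℝ (Icc (α - π / 2) (α + π / 2)) fun φ => cos (φ - α) := by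
    have := strictConcaveOn_cos_Icc.concaveOn.translate_right (-α)
    rw [preimage_const_add_Icc, show -(π / 2) - -α = α - π / 2 by ring,
      show π / 2 - -α = α + π / 2 by ring] at this
    simpa only [Function.comp_def, neg_add_eq_sub] using this
  have hconv : Convex ℝ (Ioo (-(π / 2)) (π / 2) ∩ Icc (α - π / 2) (α + π / 2)) :=
    (convex_Ioo _ _).inter (convex_Icc _ _)
  refine ((hsec.subset inter_subset_left hconv).add_convexOn
    (((neg_convexOn_iff.2 hcos).smul zero_le_two).subset inter_subset_right hconv)).congr
    fun φ _ => ?_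
  simp only [Pi.add_apply, Pi.neg_apply, smul_eq_mul]; ring

theorem strictConvexOn_sin_two_mul_sub_div_cos {α : ℝ} (hα₀ : 0 ≤ α) (hα : α < π / 2) :
    StrictConvexOn ℝ (Icc 0 (α / 2)) fun θ => sin (2 * θ - α) / cos (θ + π / 4) := by
  have hcosα : 0 < cos α := cos_pos_of_mem_Ioo ⟨by linarith, hα⟩
  have := (strictConvexOn_div_cos_sub_two_mul_cos_sub hcosα).translate_left (π / 4)
  refine (this.subset (fun θ hθ => ?_) (convex_Icc _ _)).congr fun θ hθ => ?_
  · simp only [mem_preimage, mem_inter_iff, mem_Ioo, mem_Icc] at hθ ⊢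
    refine ⟨⟨?_, ?_⟩, ?_, ?_⟩ <;> linarith [hθ.1, hθ.2]
  · have hc : cos (θ + π / 4) ≠ 0 :=
      (cos_pos_of_mem_Ioo ⟨by linarith [hθ.1], by linarith [hθ.2]⟩).ne'
    simp only [Function.comp, sin_two_mul_sub_eq_cos_sub_two_mul_cos_mul_cos]
    rw [eq_div_iff hc, sub_mul, div_mul_cancel₀ _ hc]
    ring

theorem hasDerivAt_sin_two_mul_sub_div_cos_zero (α : ℝ) :
    HasDerivAt (fun θ => sin (2 * θ - α) / cos (θ + π / 4)) (√2 * (2 * cos α - sin α)) 0 := by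
  have hnum : HasDerivAt (fun θ => sin (2 * θ - α)) (cos (2 * 0 - α) * 2) 0 :=
    (((hasDerivAt_id 0).const_mul 2).sub_const α).sin.congr_deriv (by simp)
  have hden : HasDerivAt (fun θ => cos (θ + π / 4)) (-sin (0 + π / 4)) 0 := by
    simpa using ((hasDerivAt_id 0).add_const (π / 4)).cos
  have hc : cos (0 + π / 4) ≠ 0 := by rw [zero_add, cos_pi_div_four]; positivity
  refine (hnum.fun_div hden hc).congr_deriv ?_
  simp only [mul_zero, zero_sub, cos_neg, sin_neg, zero_add, cos_pi_div_four, sin_pi_div_four]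
  rw [div_pow, sq_sqrt zero_le_two]
  ring

theorem one_sub_sub_sq_nonneg_iff {t : ℝ} (ht : 0 ≤ t) : 0 ≤ 1 - t - t ^ 2 ↔ t ≤ (√5 - 1) / 2 := by
  have h5 : √5 ^ 2 = 5 := sq_sqrt (by norm_num)
  have hfac : 1 - t - t ^ 2 = ((√5 - 1) / 2 - t) * (t + (√5 + 1) / 2) := by
    linear_combination (-1 / 4 : ℝ) * h5
  rw [hfac, mul_nonneg_iff_of_pos_right (by positivity), sub_nonneg]

theorem StrictConvexOn.eq_or_eq_or_eq_of_apply_eq {s : Set ℝ} {f : ℝ → ℝ}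
    (hf : StrictConvexOn ℝ s f) {x y z c : ℝ} (hx : x ∈ s) (hy : y ∈ s) (hz : z ∈ s)
    (hfx : f x = c) (hfy : f y = c) (hfz : f z = c) : x = y ∨ x = z ∨ y = z := by
  have hmid : ∀ {a b d}, a ∈ s → d ∈ s → a < b → b < d → f a = c → f b = c → f d = c → False := by
    intro a b d ha hd hab hbd hfa hfb hfd
    have := hf.lt_on_openSegment ha hd (hab.trans hbd).ne
      (by rw [openSegment_eq_Ioo (hab.trans hbd)]; exact ⟨hab, hbd⟩)
    rw [hfa, hfb, hfd, max_self] at this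
    exact this.false
  by_contra! hne
  obtain ⟨hxy, hxz, hyz⟩ := hne
  rcases hxy.lt_or_gt with hxy | hxy <;> rcases hxz.lt_or_gt with hxz | hxz <;>
    rcases hyz.lt_or_gt with hyz | hyz
  all_goals first
    | linarith
    | exact hmid hx hz hxy hyz hfx hfy hfz
    | exact hmid hx hy hxz hyz hfx hfz hfy
    | exact hmid hz hy hxz hxy hfz hfx hfy
    | exact hmid hy hz hxy hxz hfy hfx hfz
    | exact hmid hy hx hyz hxz hfy hfz hfx
    | exact hmid hz hx hyz hxy hfz hfy hfx

theorem stmt_17 (ρ : ℝ) (hρ : 0 < ρ) (x : Fin 2 → ℝ)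
    (hx1 : 0 ≤ x 1) (hx2 : x 1 < x 0) (hx0 : 0 < x 0)
    (κ α : ℝ) (hκ : κ = x 1 / x 0)
    (hα : α = Real.arctan (2 * κ / (1 - κ ^ 2)))
    (L : ℝ → ℝ)
    (hL : ∀ θ : ℝ, L θ = Real.sin (2 * θ - α) / Real.cos (θ + Real.pi / 4) +
      2 * Real.sqrt 2 / (ρ * (x 0 ^ 2 + x 1 ^ 2))) :
    -- (i) strict convexity on [0, α/2]
    StrictConvexOn ℝ (Set.Icc 0 (α / 2)) L ∧
    -- (ii) sign of L(0) and of L'(0)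
    ((ρ * x 0 * x 1 < 1 → 0 < L 0) ∧
     (ρ * x 0 * x 1 = 1 → L 0 = 0) ∧
     (1 < ρ * x 0 * x 1 → L 0 < 0) ∧
     (κ ≤ (Real.sqrt 5 - 1) / 2 → 0 ≤ deriv L 0) ∧
     ((Real.sqrt 5 - 1) / 2 < κ → deriv L 0 < 0)) ∧
    -- (iii) L has at most two roots in [0, α/2]
    (∀ θ₁ θ₂ θ₃ : ℝ, θ₁ ∈ Set.Icc 0 (α / 2) → θ₂ ∈ Set.Icc 0 (α / 2) →
      θ₃ ∈ Set.Icc 0 (α / 2) → L θ₁ = 0 → L θ₂ = 0 → L θ₃ = 0 →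
      θ₁ = θ₂ ∨ θ₁ = θ₃ ∨ θ₂ = θ₃) := by
  have hκ₀ : 0 ≤ κ := hκ ▸ div_nonneg hx1 hx0.le
  have hκ₁ : κ < 1 := hκ ▸ (div_lt_one hx0).2 hx2
  have hκ_gt : -1 < κ := by linarith
  have hα₀ : 0 ≤ α := hα ▸ arctan_nonneg.2 (div_nonneg (by positivity) (by nlinarith))
  have hαπ : α < π / 2 := hα ▸ arctan_lt_pi_div_two _
  have hsin : sin α = 2 * κ / (1 + κ ^ 2) := hα ▸ sin_arctan_two_mul_div_one_sub_sq hκ_gt hκ₁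
  have hcos : cos α = (1 - κ ^ 2) / (1 + κ ^ 2) := hα ▸ cos_arctan_two_mul_div_one_sub_sq hκ_gt hκ₁
  have hconv : StrictConvexOn ℝ (Icc 0 (α / 2)) L :=
    ((strictConvexOn_sin_two_mul_sub_div_cos hα₀ hαπ).add_const _).congr fun θ _ => (hL θ).symm
  have hL0 : (2 * √2 / (ρ * (x 0 ^ 2 + x 1 ^ 2))) * (1 - ρ * x 0 * x 1) = L 0 := by
    rw [hL]
    simp only [mul_zero, zero_sub, sin_neg, zero_add, cos_pi_div_four, hsin, hκ]
    field_simp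
    rw [sq_sqrt zero_le_two]
    ring
  have hL'0 : deriv L 0 = 2 * √2 * (1 - κ - κ ^ 2) / (1 + κ ^ 2) := by
    rw [show L = _ from funext hL,
      ((hasDerivAt_sin_two_mul_sub_div_cos_zero α).add_const _).deriv, hsin, hcos]
    field_simp
    ring
  have hscale : 0 < 2 * √2 / (ρ * (x 0 ^ 2 + x 1 ^ 2)) := by positivity
  refine ⟨hconv, ⟨fun h => ?_, fun h => ?_, fun h => ?_, fun h => ?_, fun h => ?_⟩,
    fun θ₁ θ₂ θ₃ h₁ h₂ h₃ => hconv.eq_or_eq_or_eq_of_apply_eq h₁ h₂ h₃⟩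
  · rw [← hL0]; exact mul_pos hscale (by linarith)
  · rw [← hL0, h, sub_self, mul_zero]
  · rw [← hL0]; exact mul_neg_of_pos_of_neg hscale (by linarith)
  · rw [hL'0]
    exact div_nonneg (mul_nonneg (by positivity) ((one_sub_sub_sq_nonneg_iff hκ₀).2 h))
      (by positivity)
  · rw [hL'0]
    have hneg := not_le.1 (mt (one_sub_sub_sq_nonneg_iff hκ₀).1 (not_le.2 h))
    exact div_neg_of_neg_of_pos (mul_neg_of_pos_of_neg (by positivity) hneg) (by positivity)
end

section
/- Let ρ > 0 and let x ∈ ℝⁿ_↓ be such that for some 1 ≤ k < n the last k entries of x are zero and x_{n−k} > 0, i.e., x₁ ≥ … ≥ x_{n−k} > 0 = x_{n−k+1} = … = xₙ. Then every global minimizer w* of G(w) := −(ρ/2)⟨x, w⟩² + eᵀw over S^{n-1}_+ satisfies (w*)_{n−k+1} = … = (w*)ₙ = 0. -/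
/-!
Suppose a minimizer `w` puts positive weight on a coordinate where `x` vanishes. Zero out all
those coordinates and add their squared mass `t` to the coordinate `i₀ = n - k - 1` (where
`x i₀ > 0`), so that `w` stays on the unit sphere. The new `i₀`-entry `√(w i₀² + t)` exceeds `w i₀` by at most
`√t`, which is at most the removed linear mass, so `eᵀw` does not increase; meanwhile `⟨x, w⟩`
strictly increases, so `-(ρ/2)⟨x, w⟩²` strictly decreases, contradicting minimality.
-/

open Finset

section ConcentrateTail

variable {ι : Type*} [Fintype ι] [DecidableEq ι] (p : ι → Prop) [DecidablePred p]

noncomputable def concentrateTail (w : ι → ℝ) (i₀ : ι) (i : ι) : ℝ :=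
  if i = i₀ then √(w i₀ ^ 2 + ∑ j with p j, w j ^ 2) else if p i then 0 else w i

variable {p} {i₀ : ι}

theorem sum_concentrateTail (hi₀ : ¬ p i₀) (w : ι → ℝ) (F : ι → ℝ → ℝ) (hF : ∀ i, F i 0 = 0) :
    ∑ i, F i (concentrateTail p w i₀ i) + F i₀ (w i₀) + ∑ i with p i, F i (w i) =
      ∑ i, F i (w i) + F i₀ (concentrateTail p w i₀ i₀) := by
  have pointwise : ∀ i, F i (concentrateTail p w i₀ i) + (if i = i₀ then F i₀ (w i₀) else 0) +
      (if p i then F i (w i) else 0) =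
        F i (w i) + (if i = i₀ then F i₀ (concentrateTail p w i₀ i₀) else 0) := by
    intro i
    by_cases h : i = i₀
    · subst h; simp only [if_true, hi₀, if_false]; ring
    · by_cases hp : p i <;> simp [concentrateTail, h, hp, hF]
  simpa only [sum_add_distrib, sum_ite_eq', mem_univ, if_true, sum_filter] using
    sum_congr (s₁ := univ) rfl fun i _ => pointwise i

theorem concentrateTail_self (w : ι → ℝ) :
    concentrateTail p w i₀ i₀ = √(w i₀ ^ 2 + ∑ j with p j, w j ^ 2) := if_pos rfl

theorem concentrateTail_nonneg {w : ι → ℝ} (hw : ∀ i, 0 ≤ w i) (i : ι) :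
    0 ≤ concentrateTail p w i₀ i := by
  unfold concentrateTail
  split_ifs
  exacts [Real.sqrt_nonneg _, le_rfl, hw i]

theorem sum_sq_concentrateTail (hi₀ : ¬ p i₀) (w : ι → ℝ) :
    ∑ i, concentrateTail p w i₀ i ^ 2 = ∑ i, w i ^ 2 := by
  have h := sum_concentrateTail hi₀ w (fun _ y => y ^ 2) (fun _ => zero_pow two_ne_zero)
  rw [concentrateTail_self, Real.sq_sqrt (by positivity)] at h
  linarith

theorem sum_mul_concentrateTail (hi₀ : ¬ p i₀) (w : ι → ℝ) {x : ι → ℝ}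
    (hx : ∀ i, p i → x i = 0) :
    ∑ i, x i * concentrateTail p w i₀ i =
      ∑ i, x i * w i + x i₀ * (concentrateTail p w i₀ i₀ - w i₀) := by
  have h := sum_concentrateTail hi₀ w (fun i y => x i * y) (fun _ => mul_zero _)
  rw [sum_eq_zero (s := univ.filter p) fun i hi => by rw [hx i (mem_filter.1 hi).2, zero_mul]] at h
  linarith

theorem sum_concentrateTail_le (hi₀ : ¬ p i₀) {w : ι → ℝ} (hw : ∀ i, 0 ≤ w i) :
    ∑ i, concentrateTail p w i₀ i ≤ ∑ i, w i := by
  have h := sum_concentrateTail hi₀ w (fun _ y => y) (fun _ => rfl)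
  have hT : ∑ j with p j, w j ^ 2 ≤ (∑ j with p j, w j) ^ 2 :=
    sum_sq_le_sq_sum_of_nonneg fun i _ => hw i
  have hs : concentrateTail p w i₀ i₀ ≤ w i₀ + ∑ j with p j, w j := by
    rw [concentrateTail_self, Real.sqrt_le_left (add_nonneg (hw i₀) (sum_nonneg fun i _ => hw i))]
    nlinarith [hw i₀, sum_nonneg fun i (_ : i ∈ univ.filter p) => hw i]
  linarith

theorem lt_concentrateTail_self {w : ι → ℝ} (hw : ∀ i, 0 ≤ w i) {j : ι} (hj : p j)
    (hwj : w j ≠ 0) : w i₀ < concentrateTail p w i₀ i₀ := by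
  rw [concentrateTail_self, Real.lt_sqrt (hw i₀), lt_add_iff_pos_right]
  exact sum_pos' (fun i _ => sq_nonneg _)
    ⟨j, mem_filter.2 ⟨mem_univ j, hj⟩, pow_pos ((hw j).lt_of_ne' hwj) 2⟩

end ConcentrateTail

/-- The function `G` of the statement. -/
noncomputable def objective {ι : Type*} [Fintype ι] (ρ : ℝ) (x w : ι → ℝ) : ℝ :=
  -(ρ / 2) * (∑ i, x i * w i) ^ 2 + ∑ i, w i

theorem objective_concentrateTail_lt {ι : Type*} [Fintype ι] [DecidableEq ι] {p : ι → Prop}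
    [DecidablePred p] {ρ : ℝ} (hρ : 0 < ρ) {x w : ι → ℝ} (hx : ∀ i, 0 ≤ x i)
    (hxp : ∀ i, p i → x i = 0) (hw : ∀ i, 0 ≤ w i) {i₀ j : ι} (hi₀ : ¬ p i₀) (hx₀ : 0 < x i₀)
    (hj : p j) (hwj : w j ≠ 0) :
    objective ρ x (concentrateTail p w i₀) < objective ρ x w := by
  have hP : 0 ≤ ∑ i, x i * w i := sum_nonneg fun i _ => mul_nonneg (hx i) (hw i)
  have hδ : 0 < x i₀ * (concentrateTail p w i₀ i₀ - w i₀) :=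
    mul_pos hx₀ (sub_pos.2 (lt_concentrateTail_self hw hj hwj))
  have hsq : (∑ i, x i * w i) ^ 2 <
      (∑ i, x i * w i + x i₀ * (concentrateTail p w i₀ i₀ - w i₀)) ^ 2 :=
    pow_lt_pow_left₀ (lt_add_of_pos_right _ hδ) hP two_ne_zero
  unfold objective
  rw [sum_mul_concentrateTail hi₀ w hxp]
  nlinarith [sum_concentrateTail_le hi₀ hw]

theorem stmt_18 {n : ℕ} (ρ : ℝ) (hρ : 0 < ρ)
    (x : Fin n → ℝ) (hnonneg : ∀ i, 0 ≤ x i)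
    (k : ℕ) (hkn : k < n)
    (hzero : ∀ i : Fin n, n - k ≤ (i : ℕ) → x i = 0)
    (hpos : 0 < x ⟨n - k - 1, by omega⟩)
    (ws : Fin n → ℝ) (hws1 : ∑ i, (ws i) ^ 2 = 1) (hws2 : ∀ i, 0 ≤ ws i)
    (hmin : ∀ w : Fin n → ℝ, (∑ i, (w i) ^ 2 = 1) → (∀ i, 0 ≤ w i) →
      -(ρ / 2) * (∑ i, x i * ws i) ^ 2 + (∑ i, ws i) ≤
        -(ρ / 2) * (∑ i, x i * w i) ^ 2 + (∑ i, w i)) :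
    ∀ i : Fin n, n - k ≤ (i : ℕ) → ws i = 0 := by
  intro j hj
  by_contra hwj
  let i₀ : Fin n := ⟨n - k - 1, by omega⟩
  have hi₀ : ¬ n - k ≤ (i₀ : ℕ) := by simp only [i₀]; omega
  let tail : Fin n → Prop := fun i => n - k ≤ (i : ℕ)
  have hmoved := hmin (concentrateTail tail ws i₀)
    (by rw [sum_sq_concentrateTail (p := tail) hi₀, hws1]) (concentrateTail_nonneg hws2)
  exact (objective_concentrateTail_lt hρ hnonneg hzero hws2 hi₀ hpos hj hwj).not_ge hmoved
end
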